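/- arXiv:1108.1851 — 2 statements merged into one kernel-verified Lean document; each statement's English description precedes it below -/
import Mathlib

section
/- Let d ≥ 1, let s_1, …, s_n ∈ ℝ^d be distinct points, and let 0 < ρ_1 < ρ_2. Then for every vector z ∈ ℝ^n, (1/ρ_2)·zᵀ Γ_n(ρ_2)⁻¹ z ≤ (1/ρ_1)·zᵀ Γ_n(ρ_1)⁻¹ z. (This is the paper's Lemma 1, monotonicity in ρ of the microergodic-parameter estimator ĉ_n(ρ) = zᵀΓ_n(ρ)⁻¹z/(nρ^{2ν}), in the case of Matérn smoothness ν = 1/2.) -/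
/-!
Bochner subordination: for `r ≥ 0`,
`ρ e^{-r/ρ} = ∫₀^∞ e^{-t/ρ²} (π t)^{-1/2} e^{-r²/(4t)} dt`,
which follows from Glasser's integral `∫₀^∞ e^{-w² - a²/(4w²)} dw = (√π/2) e^{-a}`.
Hence `ρ Γₙ(ρ)` is a mixture of Gaussian kernel matrices with weights increasing in `ρ`.
Gaussian kernel matrices are positive semidefinite, and positive definite at distinct points,
because their quadratic forms are integrals of `e^{-c‖v‖²} |∑ zᵢ e^{i⟪sᵢ, v⟫}|²`
(Fourier transform of the Gaussian, plus Dedekind's independence of characters).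
So `ρ ↦ ρ Γₙ(ρ)` is Loewner-monotone with positive definite values, and inversion reverses
the Loewner order.
-/

open Real Set MeasureTheory Matrix
open scoped RealInnerProductSpace MatrixOrder

section Glasser

lemma integrableOn_exp_neg_sq_sub_div_sq (a : ℝ) :
    IntegrableOn (fun w : ℝ => rexp (-w ^ 2 - a ^ 2 / (4 * w ^ 2))) (Ioi 0) := by
  refine (integrable_exp_neg_mul_sq one_pos).integrableOn.mono' (by fun_prop)
    (.of_forall fun w => ?_)
  rw [norm_of_nonneg (exp_pos _).le, neg_one_mul]
  exact exp_le_exp.2 (by linarith [div_nonneg (sq_nonneg a) (by positivity : (0:ℝ) ≤ 4 * w ^ 2)])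

lemma image_div_two_mul_Ioi {a : ℝ} (ha : 0 < a) : (fun w => a / (2 * w)) '' Ioi 0 = Ioi 0 := by
  refine Subset.antisymm (image_subset_iff.2 fun w (hw : 0 < w) => ?_) fun t (ht : 0 < t) => ?_
  · simp only [mem_preimage, mem_Ioi]; positivity
  · exact ⟨a / (2 * t), by simp only [mem_Ioi]; positivity, by field_simp⟩

lemma injOn_div_two_mul {a : ℝ} (ha : 0 < a) : InjOn (fun w => a / (2 * w)) (Ioi 0) :=
  fun x (hx : 0 < x) y (hy : 0 < y) h => by
    field_simp at h
    nlinarith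

lemma hasDerivWithinAt_div_two_mul (a : ℝ) {x : ℝ} (hx : x ≠ 0) (s : Set ℝ) :
    HasDerivWithinAt (fun w => a / (2 * w)) (-(a / (2 * x ^ 2))) s x := by
  rw [show (fun w => a / (2 * w)) = fun w => a / 2 * w⁻¹ by funext w; ring]
  exact ((hasDerivWithinAt_inv hx s).const_mul (a / 2)).congr_deriv (by ring)

lemma image_sub_div_two_mul_Ioi {a : ℝ} (ha : 0 < a) :
    (fun w => w - a / (2 * w)) '' Ioi 0 = univ := by
  refine eq_univ_of_forall fun t => ?_
  have hs : t ^ 2 < √(t ^ 2 + 2 * a) ^ 2 := by rw [sq_sqrt (by positivity)]; linarith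
  have hts : 0 < t + √(t ^ 2 + 2 * a) := by nlinarith [abs_lt_of_sq_lt_sq' hs (sqrt_nonneg _)]
  refine ⟨(t + √(t ^ 2 + 2 * a)) / 2, by simp only [mem_Ioi]; positivity, ?_⟩
  field_simp
  nlinarith [sq_sqrt (by positivity : 0 ≤ t ^ 2 + 2 * a)]

lemma strictMonoOn_sub_div_two_mul {a : ℝ} (ha : 0 < a) :
    StrictMonoOn (fun w => w - a / (2 * w)) (Ioi 0) :=
  fun x (hx : 0 < x) y (hy : 0 < y) hxy => by
    have : a / (2 * y) < a / (2 * x) := div_lt_div_of_pos_left ha (by positivity) (by linarith)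
    simp only; linarith

lemma hasDerivWithinAt_sub_div_two_mul (a : ℝ) {x : ℝ} (hx : x ≠ 0) (s : Set ℝ) :
    HasDerivWithinAt (fun w => w - a / (2 * w)) (1 + a / (2 * x ^ 2)) s x :=
  ((hasDerivAt_id' x).hasDerivWithinAt.sub (hasDerivWithinAt_div_two_mul a hx s)).congr_deriv
    (by ring)

lemma exp_neg_sq_sub_div_sq_div_two_mul {a w : ℝ} (ha : a ≠ 0) (hw : w ≠ 0) :
    rexp (-(a / (2 * w)) ^ 2 - a ^ 2 / (4 * (a / (2 * w)) ^ 2)) =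
      rexp (-w ^ 2 - a ^ 2 / (4 * w ^ 2)) := by
  congr 1
  field_simp
  ring

lemma integrableOn_div_two_mul_sq_mul_exp_neg_sq_sub_div_sq {a : ℝ} (ha : 0 < a) :
    IntegrableOn (fun w => a / (2 * w ^ 2) * rexp (-w ^ 2 - a ^ 2 / (4 * w ^ 2))) (Ioi 0) := by
  have h := (integrableOn_image_iff_integrableOn_abs_deriv_smul measurableSet_Ioi
    (fun x (hx : 0 < x) => hasDerivWithinAt_div_two_mul a hx.ne' _) (injOn_div_two_mul ha) _).1
    (image_div_two_mul_Ioi ha ▸ integrableOn_exp_neg_sq_sub_div_sq a)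
  refine h.congr_fun (fun w (hw : 0 < w) => ?_) measurableSet_Ioi
  dsimp only
  rw [exp_neg_sq_sub_div_sq_div_two_mul ha.ne' hw.ne', abs_neg, abs_of_pos (by positivity),
    smul_eq_mul]

lemma integral_div_two_mul_sq_mul_exp_neg_sq_sub_div_sq {a : ℝ} (ha : 0 < a) :
    ∫ w in Ioi 0, a / (2 * w ^ 2) * rexp (-w ^ 2 - a ^ 2 / (4 * w ^ 2)) =
      ∫ w in Ioi 0, rexp (-w ^ 2 - a ^ 2 / (4 * w ^ 2)) := by
  conv_rhs => rw [← image_div_two_mul_Ioi ha]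
  rw [integral_image_eq_integral_abs_deriv_smul measurableSet_Ioi
    (fun x (hx : 0 < x) => hasDerivWithinAt_div_two_mul a hx.ne' _) (injOn_div_two_mul ha)]
  refine setIntegral_congr_fun measurableSet_Ioi fun w (hw : 0 < w) => ?_
  rw [exp_neg_sq_sub_div_sq_div_two_mul ha.ne' hw.ne', abs_neg, abs_of_pos (by positivity),
    smul_eq_mul]

theorem integral_exp_neg_sq_sub_div_sq {a : ℝ} (ha : 0 ≤ a) :
    ∫ w in Ioi 0, rexp (-w ^ 2 - a ^ 2 / (4 * w ^ 2)) = √π / 2 * rexp (-a) := by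
  obtain rfl | ha := ha.eq_or_lt
  · simpa [neg_one_mul] using integral_gaussian_Ioi 1
  -- substitute `t = w - a / (2 * w)` in `√π = ∫ t, exp (-t ^ 2)`
  have hsubst : √π = ∫ w in Ioi 0,
      (1 + a / (2 * w ^ 2)) * (rexp a * rexp (-w ^ 2 - a ^ 2 / (4 * w ^ 2))) := by
    rw [← div_one π, ← integral_gaussian 1, ← setIntegral_univ, ← image_sub_div_two_mul_Ioi ha,
      integral_image_eq_integral_abs_deriv_smul measurableSet_Ioi
        (fun x (hx : 0 < x) => hasDerivWithinAt_sub_div_two_mul a hx.ne' _)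
        (strictMonoOn_sub_div_two_mul ha).injOn]
    refine setIntegral_congr_fun measurableSet_Ioi fun w (hw : 0 < w) => ?_
    rw [abs_of_pos (by positivity), smul_eq_mul, ← exp_add]
    congr 2
    field_simp
    ring
  have hsplit : √π = rexp a * (∫ w in Ioi 0, rexp (-w ^ 2 - a ^ 2 / (4 * w ^ 2))) +
      rexp a * ∫ w in Ioi 0, a / (2 * w ^ 2) * rexp (-w ^ 2 - a ^ 2 / (4 * w ^ 2)) := by
    rw [hsubst, ← integral_const_mul, ← integral_const_mul, ← integral_add
      ((integrableOn_exp_neg_sq_sub_div_sq a).const_mul _)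
      ((integrableOn_div_two_mul_sq_mul_exp_neg_sq_sub_div_sq ha).const_mul _)]
    exact setIntegral_congr_fun measurableSet_Ioi fun w _ => by ring
  rw [integral_div_two_mul_sq_mul_exp_neg_sq_sub_div_sq ha] at hsplit
  generalize ∫ w in Ioi 0, rexp (-w ^ 2 - a ^ 2 / (4 * w ^ 2)) = I at hsplit ⊢
  rw [exp_neg]
  field_simp
  linarith

end Glasser

section Subordination

noncomputable def subordinationWeight (ρ t : ℝ) : ℝ := rexp (-t / ρ ^ 2) / √(π * t)

lemma subordinationWeight_pos (ρ : ℝ) {t : ℝ} (ht : 0 < t) : 0 < subordinationWeight ρ t := by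
  unfold subordinationWeight; positivity

lemma subordinationWeight_le_subordinationWeight {ρ₁ ρ₂ t : ℝ} (hρ₁ : 0 < ρ₁) (hρ₁₂ : ρ₁ ≤ ρ₂)
    (ht : 0 < t) :
    subordinationWeight ρ₁ t ≤ subordinationWeight ρ₂ t := by
  have : t / ρ₂ ^ 2 ≤ t / ρ₁ ^ 2 := by gcongr
  unfold subordinationWeight
  gcongr rexp ?_ / _
  rw [neg_div, neg_div]
  linarith

lemma image_mul_sq_Ioi {ρ : ℝ} (hρ : 0 < ρ) : (fun w => (ρ * w) ^ 2) '' Ioi 0 = Ioi 0 := by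
  refine Subset.antisymm (image_subset_iff.2 fun w (hw : 0 < w) => ?_) fun t (ht : 0 < t) => ?_
  · simp only [mem_preimage, mem_Ioi]; positivity
  · exact ⟨√t / ρ, by simp only [mem_Ioi]; positivity, by field_simp; exact sq_sqrt ht.le⟩

lemma injOn_mul_sq {ρ : ℝ} (hρ : 0 < ρ) : InjOn (fun w => (ρ * w) ^ 2) (Ioi 0) :=
  fun x (hx : 0 < x) y (hy : 0 < y) h => by
    have := (pow_left_inj₀ (mul_pos hρ hx).le (mul_pos hρ hy).le two_ne_zero).1 h
    exact mul_left_cancel₀ hρ.ne' this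

lemma hasDerivAt_mul_sq (ρ x : ℝ) : HasDerivAt (fun w => (ρ * w) ^ 2) (2 * ρ ^ 2 * x) x :=
  (((hasDerivAt_id' x).const_mul ρ).pow 2).congr_deriv (by ring)

lemma subordinationWeight_mul_exp_substitution {ρ τ w : ℝ} (hρ : 0 < ρ) (hw : 0 < w) :
    |2 * ρ ^ 2 * w| • (subordinationWeight ρ ((ρ * w) ^ 2) * rexp (-τ ^ 2 / (4 * (ρ * w) ^ 2))) =
      2 * ρ / √π * rexp (-w ^ 2 - (τ / ρ) ^ 2 / (4 * w ^ 2)) := by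
  have hsqrt : √(π * (ρ * w) ^ 2) = √π * (ρ * w) := by
    rw [sqrt_mul pi_pos.le, sqrt_sq (by positivity)]
  rw [abs_of_pos (by positivity), smul_eq_mul, subordinationWeight, hsqrt, sub_eq_add_neg, exp_add]
  field_simp

theorem integral_subordinationWeight_mul_exp {ρ τ : ℝ} (hρ : 0 < ρ) (hτ : 0 ≤ τ) :
    ∫ t in Ioi 0, subordinationWeight ρ t * rexp (-τ ^ 2 / (4 * t)) = ρ * rexp (-τ / ρ) := by
  rw [← image_mul_sq_Ioi hρ, integral_image_eq_integral_abs_deriv_smul measurableSet_Ioi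
    (fun x _ => (hasDerivAt_mul_sq ρ x).hasDerivWithinAt) (injOn_mul_sq hρ),
    setIntegral_congr_fun measurableSet_Ioi fun w (hw : 0 < w) =>
      subordinationWeight_mul_exp_substitution hρ hw,
    integral_const_mul, integral_exp_neg_sq_sub_div_sq (by positivity)]
  field_simp

lemma integrableOn_subordinationWeight_mul_exp {ρ : ℝ} (hρ : 0 < ρ) (τ : ℝ) :
    IntegrableOn (fun t => subordinationWeight ρ t * rexp (-τ ^ 2 / (4 * t))) (Ioi 0) := by
  rw [← image_mul_sq_Ioi hρ, integrableOn_image_iff_integrableOn_abs_deriv_smul measurableSet_Ioi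
    (fun x _ => (hasDerivAt_mul_sq ρ x).hasDerivWithinAt) (injOn_mul_sq hρ)]
  exact IntegrableOn.congr_fun ((integrableOn_exp_neg_sq_sub_div_sq (τ / ρ)).const_mul _)
    (fun w (hw : 0 < w) => (subordinationWeight_mul_exp_substitution hρ hw).symm) measurableSet_Ioi

end Subordination

section QuadraticForm

variable {ι : Type*} [Fintype ι]

lemma dotProduct_mulVec_eq_sum (M : Matrix ι ι ℝ) (z : ι → ℝ) :
    z ⬝ᵥ (M *ᵥ z) = ∑ i, ∑ j, z i * z j * M i j := by
  simp only [dotProduct, mulVec, Finset.mul_sum]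
  exact Finset.sum_congr rfl fun i _ => Finset.sum_congr rfl fun j _ => by ring

variable {α : Type*} [MeasurableSpace α] {μ : Measure α} {M : α → Matrix ι ι ℝ}

lemma integrable_dotProduct_mulVec (hM : ∀ i j, Integrable (fun a => M a i j) μ) (z : ι → ℝ) :
    Integrable (fun a => z ⬝ᵥ (M a *ᵥ z)) μ := by
  simp only [dotProduct_mulVec_eq_sum]
  exact integrable_finsetSum _ fun i _ => integrable_finsetSum _ fun j _ => (hM i j).const_mul _

lemma integral_dotProduct_mulVec (hM : ∀ i j, Integrable (fun a => M a i j) μ) (z : ι → ℝ) :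
    ∫ a, z ⬝ᵥ (M a *ᵥ z) ∂μ = z ⬝ᵥ ((of fun i j => ∫ a, M a i j ∂μ) *ᵥ z) := by
  simp only [dotProduct_mulVec_eq_sum, of_apply]
  rw [integral_finsetSum _ fun i _ => integrable_finsetSum _ fun j _ => (hM i j).const_mul _]
  simp_rw [integral_finsetSum _ fun j _ => (hM _ j).const_mul _, integral_const_mul]

theorem Matrix.PosDef.inv_le_inv [DecidableEq ι] {A B : Matrix ι ι ℝ} (hA : A.PosDef)
    (hAB : A ≤ B) : B⁻¹ ≤ A⁻¹ := by
  have hB : B.PosDef := by simpa using hA.add_posSemidef (le_iff.1 hAB)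
  refine le_iff.2 (posSemidef_iff_dotProduct_mulVec.2
    ⟨hA.isHermitian.inv.sub hB.isHermitian.inv, fun z => ?_⟩)
  rw [star_trivial, sub_mulVec, dotProduct_sub, sub_nonneg]
  set u := A⁻¹ *ᵥ z
  set y := B⁻¹ *ᵥ z
  have hAu : A *ᵥ u = z := by
    simp [u, mulVec_mulVec, mul_nonsing_inv _ (A.isUnit_iff_isUnit_det.1 hA.isUnit)]
  have hBy : B *ᵥ y = z := by
    simp [y, mulVec_mulVec, mul_nonsing_inv _ (B.isUnit_iff_isUnit_det.1 hB.isUnit)]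
  have hAy : u ⬝ᵥ (A *ᵥ y) = z ⬝ᵥ y := by
    rw [dotProduct_mulVec, ← mulVec_transpose, ← conjTranspose_eq_transpose_of_trivial,
      hA.isHermitian.eq, hAu]
  -- `0 ≤ (y - u)ᵀ A (y - u) = yᵀ A y - 2 zᵀ y + zᵀ u ≤ yᵀ B y - 2 zᵀ y + zᵀ u = zᵀ u - zᵀ y`
  have h₀ := hA.posSemidef.dotProduct_mulVec_nonneg (y - u)
  have h₁ := (le_iff.1 hAB).dotProduct_mulVec_nonneg y
  simp only [star_trivial, mulVec_sub, sub_mulVec, dotProduct_sub, sub_dotProduct, hAu, hBy, hAy]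
    at h₀ h₁
  rw [dotProduct_comm y z, dotProduct_comm u z] at *
  linarith

end QuadraticForm

section Kernels

variable {V : Type*} [NormedAddCommGroup V] {ι : Type*}

noncomputable def gaussKernel (x : ι → V) (t : ℝ) : Matrix ι ι ℝ :=
  of fun i j => rexp (-‖x i - x j‖ ^ 2 / (4 * t))

noncomputable def expKernel (x : ι → V) (ρ : ℝ) : Matrix ι ι ℝ :=
  of fun i j => rexp (-‖x i - x j‖ / ρ)

lemma isHermitian_gaussKernel (x : ι → V) (t : ℝ) : (gaussKernel x t).IsHermitian := by
  ext i j; simp [gaussKernel, norm_sub_rev]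

lemma isHermitian_expKernel (x : ι → V) (ρ : ℝ) : (expKernel x ρ).IsHermitian := by
  ext i j; simp [expKernel, norm_sub_rev]

lemma integrableOn_subordinationWeight_smul_gaussKernel_apply (x : ι → V) {ρ : ℝ} (hρ : 0 < ρ)
    (i j : ι) : IntegrableOn (fun t => (subordinationWeight ρ t • gaussKernel x t) i j) (Ioi 0) :=
  integrableOn_subordinationWeight_mul_exp hρ _

lemma smul_expKernel_eq_integral (x : ι → V) {ρ : ℝ} (hρ : 0 < ρ) :
    ρ • expKernel x ρ =
      of fun i j => ∫ t in Ioi 0, (subordinationWeight ρ t • gaussKernel x t) i j := by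
  ext i j
  simp only [Matrix.smul_apply, smul_eq_mul, expKernel, gaussKernel, of_apply]
  exact (integral_subordinationWeight_mul_exp hρ (norm_nonneg _)).symm

variable [Fintype ι]

theorem dotProduct_smul_expKernel_mulVec_eq_integral (x : ι → V) (z : ι → ℝ) {ρ : ℝ}
    (hρ : 0 < ρ) : z ⬝ᵥ ((ρ • expKernel x ρ) *ᵥ z) =
      ∫ t in Ioi 0, subordinationWeight ρ t * (z ⬝ᵥ (gaussKernel x t *ᵥ z)) := by
  simp_rw [smul_expKernel_eq_integral x hρ, ← integral_dotProduct_mulVec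
    (integrableOn_subordinationWeight_smul_gaussKernel_apply x hρ), smul_mulVec, dotProduct_smul,
    smul_eq_mul]

lemma integrableOn_subordinationWeight_mul_dotProduct_gaussKernel_mulVec (x : ι → V)
    (z : ι → ℝ) {ρ : ℝ} (hρ : 0 < ρ) :
    IntegrableOn (fun t => subordinationWeight ρ t * (z ⬝ᵥ (gaussKernel x t *ᵥ z))) (Ioi 0) := by
  have h := integrable_dotProduct_mulVec
    (integrableOn_subordinationWeight_smul_gaussKernel_apply x hρ) z
  simp only [smul_mulVec, dotProduct_smul, smul_eq_mul] at h
  exact h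

end Kernels

section GaussKernel

open Complex

variable {V : Type*} [NormedAddCommGroup V] [InnerProductSpace ℝ V]

noncomputable def expInnerChar (x : V) : AddChar V ℂ where
  toFun v := cexp (I * ⟪x, v⟫)
  map_zero_eq_one' := by simp
  map_add_eq_mul' a b := by simp [inner_add_right, mul_add, Complex.exp_add]

lemma expInnerChar_apply (x v : V) : expInnerChar x v = cexp (I * ⟪x, v⟫) := rfl

lemma expInnerChar_injective : Function.Injective (expInnerChar (V := V)) := by
  intro x y h
  by_contra hxy
  have hne : ‖x - y‖ ≠ 0 := norm_ne_zero_iff.2 (sub_ne_zero.2 hxy)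
  set w := (π / ‖x - y‖ ^ 2) • (x - y)
  have hw : ⟪x, w⟫ - ⟪y, w⟫ = π := by
    rw [← inner_sub_left, real_inner_smul_right, real_inner_self_eq_norm_sq]
    field_simp
  have h1 : cexp (I * ⟪x, w⟫ - I * ⟪y, w⟫) = 1 := by
    rw [Complex.exp_sub, ← expInnerChar_apply, h, expInnerChar_apply,
      div_self (Complex.exp_ne_zero _)]
  rw [← mul_sub, ← ofReal_sub, hw, mul_comm, Complex.exp_pi_mul_I] at h1
  norm_num at h1

variable {ι : Type*} [Fintype ι]

noncomputable def expSum (x : ι → V) (z : ι → ℝ) (v : V) : ℂ := ∑ i, z i * expInnerChar (x i) v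

lemma continuous_expSum (x : ι → V) (z : ι → ℝ) : Continuous (expSum x z) := by
  unfold expSum
  simp only [expInnerChar_apply]
  fun_prop

lemma exists_expSum_ne_zero {x : ι → V} (hx : Function.Injective x) {z : ι → ℝ} (hz : z ≠ 0) :
    ∃ v, expSum x z v ≠ 0 := by
  by_contra! h
  have hli := (linearIndependent_monoidHom (Multiplicative V) ℂ).comp
    (fun i => (expInnerChar (x i)).toMonoidHom)
    ((AddChar.toMonoidHomEquiv.injective.comp expInnerChar_injective).comp hx)
  refine hz (funext fun i => ?_)
  have := Fintype.linearIndependent_iff.mp hli (fun i => (z i : ℂ)) (funext fun v => by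
    simpa [expSum] using h (Multiplicative.toAdd v)) i
  exact_mod_cast this

lemma sum_sum_mul_cexp_eq_normSq (x : ι → V) (z : ι → ℝ) (c : ℝ) (v : V) :
    ∑ i, ∑ j, (z i * z j : ℂ) * cexp (-c * ‖v‖ ^ 2 + I * ⟪x i - x j, v⟫) =
      (rexp (-c * ‖v‖ ^ 2) * normSq (expSum x z v) : ℝ) := by
  have hconj : (starRingEnd ℂ) (expSum x z v) = ∑ j, (z j : ℂ) * cexp (-(I * ⟪x j, v⟫)) := by
    simp [expSum, expInnerChar_apply, map_sum, ← Complex.exp_conj]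
  rw [ofReal_mul, ← Complex.mul_conj, hconj, expSum, Finset.sum_mul_sum, ofReal_exp,
    Finset.mul_sum]
  refine Finset.sum_congr rfl fun i _ => ?_
  rw [Finset.mul_sum]
  refine Finset.sum_congr rfl fun j _ => ?_
  rw [inner_sub_left, ofReal_sub, expInnerChar_apply, mul_sub, sub_eq_add_neg, Complex.exp_add,
    Complex.exp_add]
  push_cast
  ring

section Integral

variable [FiniteDimensional ℝ V] [MeasurableSpace V] [BorelSpace V]

lemma integrable_cexp_neg_mul_sq_norm_add_I_mul_inner {c : ℝ} (hc : 0 < c) (w : V) :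
    Integrable (fun v : V => cexp (-c * ‖v‖ ^ 2 + I * ⟪w, v⟫)) :=
  GaussianFourier.integrable_cexp_neg_mul_sq_norm_add (by simpa using hc) I w

lemma integral_cexp_neg_mul_sq_norm_add_I_mul_inner {c : ℝ} (hc : 0 < c) (w : V) :
    ∫ v : V, cexp (-c * ‖v‖ ^ 2 + I * ⟪w, v⟫) =
      ((π / c) ^ (Module.finrank ℝ V / 2 : ℝ) * rexp (-‖w‖ ^ 2 / (4 * c)) : ℝ) := by
  rw [GaussianFourier.integral_cexp_neg_mul_sq_norm_add (by simpa using hc), ofReal_mul,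
    ofReal_cpow (by positivity), ofReal_exp, I_sq]
  push_cast
  ring_nf

lemma integrable_exp_mul_normSq_expSum (x : ι → V) (z : ι → ℝ) {c : ℝ} (hc : 0 < c) :
    Integrable (fun v : V => rexp (-c * ‖v‖ ^ 2) * normSq (expSum x z v)) := by
  have hsum : Integrable fun v : V =>
      ∑ i, ∑ j, (z i * z j : ℂ) * cexp (-c * ‖v‖ ^ 2 + I * ⟪x i - x j, v⟫) :=
    integrable_finsetSum _ fun i _ => integrable_finsetSum _ fun j _ =>
      (integrable_cexp_neg_mul_sq_norm_add_I_mul_inner hc _).const_mul _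
  refine hsum.re.congr (.of_forall fun v => ?_)
  simp only [sum_sum_mul_cexp_eq_normSq, RCLike.re_to_complex, ofReal_re]

lemma dotProduct_gaussKernel_mulVec_eq_integral (x : ι → V) (z : ι → ℝ) {c : ℝ} (hc : 0 < c) :
    (π / c) ^ (Module.finrank ℝ V / 2 : ℝ) * (z ⬝ᵥ (gaussKernel x c *ᵥ z)) =
      ∫ v : V, rexp (-c * ‖v‖ ^ 2) * normSq (expSum x z v) := by
  have hint i j : Integrable fun v : V =>
      (z i * z j : ℂ) * cexp (-c * ‖v‖ ^ 2 + I * ⟪x i - x j, v⟫) :=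
    (integrable_cexp_neg_mul_sq_norm_add_I_mul_inner hc _).const_mul _
  apply ofReal_injective
  rw [← integral_complex_ofReal]
  simp_rw [← sum_sum_mul_cexp_eq_normSq]
  rw [integral_finsetSum _ fun i _ => integrable_finsetSum _ fun j _ => hint i j]
  simp_rw [integral_finsetSum _ fun j _ => hint _ j, integral_const_mul,
    integral_cexp_neg_mul_sq_norm_add_I_mul_inner hc, dotProduct_mulVec_eq_sum, Finset.mul_sum]
  simp only [gaussKernel, of_apply]
  push_cast
  exact Finset.sum_congr rfl fun i _ => Finset.sum_congr rfl fun j _ => by ring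

end Integral

variable [FiniteDimensional ℝ V]

theorem posSemidef_gaussKernel (x : ι → V) {t : ℝ} (ht : 0 < t) :
    (gaussKernel x t).PosSemidef := by
  borelize V
  refine posSemidef_iff_dotProduct_mulVec.2 ⟨isHermitian_gaussKernel x t, fun z => ?_⟩
  have : 0 ≤ ∫ v : V, rexp (-t * ‖v‖ ^ 2) * normSq (expSum x z v) :=
    integral_nonneg fun v => mul_nonneg (exp_pos _).le (normSq_nonneg _)
  rw [star_trivial]
  exact nonneg_of_mul_nonneg_right (dotProduct_gaussKernel_mulVec_eq_integral x z ht ▸ this)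
    (by positivity)

theorem posDef_gaussKernel {x : ι → V} (hx : Function.Injective x) {t : ℝ} (ht : 0 < t) :
    (gaussKernel x t).PosDef := by
  borelize V
  refine posDef_iff_dotProduct_mulVec.2 ⟨isHermitian_gaussKernel x t, fun z hz => ?_⟩
  obtain ⟨v₀, hv₀⟩ := exists_expSum_ne_zero hx hz
  have : 0 < ∫ v : V, rexp (-t * ‖v‖ ^ 2) * normSq (expSum x z v) :=
    integral_pos_of_integrable_nonneg_nonzero (x := v₀)
      (by have := continuous_expSum x z; fun_prop) (integrable_exp_mul_normSq_expSum x z ht)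
      (fun v => mul_nonneg (exp_pos _).le (normSq_nonneg _))
      (mul_ne_zero (exp_ne_zero _) (normSq_pos.2 hv₀).ne')
  rw [star_trivial]
  exact pos_of_mul_pos_right (dotProduct_gaussKernel_mulVec_eq_integral x z ht ▸ this)
    (by positivity)

end GaussKernel

section ExpKernel

variable {V : Type*} [NormedAddCommGroup V] [InnerProductSpace ℝ V] [FiniteDimensional ℝ V]
  {ι : Type*} [Fintype ι]

theorem posDef_expKernel {x : ι → V} (hx : Function.Injective x) {ρ : ℝ} (hρ : 0 < ρ) :
    (expKernel x ρ).PosDef := by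
  refine posDef_iff_dotProduct_mulVec.2 ⟨isHermitian_expKernel x ρ, fun z hz => ?_⟩
  have hpos t (ht : 0 < t) : 0 < subordinationWeight ρ t * (z ⬝ᵥ (gaussKernel x t *ᵥ z)) := by
    have := (posDef_gaussKernel hx ht).dotProduct_mulVec_pos hz
    rw [star_trivial] at this
    exact mul_pos (subordinationWeight_pos ρ ht) this
  have : 0 < z ⬝ᵥ ((ρ • expKernel x ρ) *ᵥ z) := by
    rw [dotProduct_smul_expKernel_mulVec_eq_integral x z hρ,
      setIntegral_pos_iff_support_of_nonneg_ae
        ((ae_restrict_mem measurableSet_Ioi).mono fun t ht => (hpos t ht).le)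
        (integrableOn_subordinationWeight_mul_dotProduct_gaussKernel_mulVec x z hρ)]
    refine lt_of_lt_of_le ?_ (measure_mono (s := Ioi 0) fun t ht => ⟨(hpos t ht).ne', ht⟩)
    simp
  rw [smul_mulVec, dotProduct_smul, smul_eq_mul] at this
  rw [star_trivial]
  exact pos_of_mul_pos_right this hρ.le

theorem smul_expKernel_le_smul_expKernel (x : ι → V) {ρ₁ ρ₂ : ℝ} (hρ₁ : 0 < ρ₁)
    (hρ₁₂ : ρ₁ ≤ ρ₂) : ρ₁ • expKernel x ρ₁ ≤ ρ₂ • expKernel x ρ₂ := by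
  have hρ₂ := hρ₁.trans_le hρ₁₂
  refine le_iff.2 (posSemidef_iff_dotProduct_mulVec.2 ⟨?_, fun z => ?_⟩)
  · exact ((isHermitian_expKernel x ρ₂).smul (.all _)).sub
      ((isHermitian_expKernel x ρ₁).smul (.all _))
  rw [star_trivial, sub_mulVec, dotProduct_sub, sub_nonneg,
    dotProduct_smul_expKernel_mulVec_eq_integral x z hρ₁,
    dotProduct_smul_expKernel_mulVec_eq_integral x z hρ₂]
  refine setIntegral_mono_on
    (integrableOn_subordinationWeight_mul_dotProduct_gaussKernel_mulVec x z hρ₁)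
    (integrableOn_subordinationWeight_mul_dotProduct_gaussKernel_mulVec x z hρ₂)
    measurableSet_Ioi fun t (ht : 0 < t) => ?_
  have := (posSemidef_gaussKernel x ht).dotProduct_mulVec_nonneg z
  rw [star_trivial] at this
  gcongr
  exact subordinationWeight_le_subordinationWeight hρ₁ hρ₁₂ ht

end ExpKernel

theorem fixed_range_quadratic_form_antitone_nu_half_general
    (d n : ℕ)
    (s : Fin n → EuclideanSpace ℝ (Fin d)) (hs : Function.Injective s)
    (ρ₁ ρ₂ : ℝ) (hρ₁ : 0 < ρ₁) (hρ₁₂ : ρ₁ < ρ₂)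
    (z : Fin n → ℝ) :
    (1 / ρ₂) * (z ⬝ᵥ ((Matrix.of fun i j => Real.exp (-‖s i - s j‖ / ρ₂))⁻¹ *ᵥ z))
      ≤ (1 / ρ₁) * (z ⬝ᵥ ((Matrix.of fun i j => Real.exp (-‖s i - s j‖ / ρ₁))⁻¹ *ᵥ z)) := by
  have hρ₂ := hρ₁.trans hρ₁₂
  have hle : (ρ₂ • expKernel s ρ₂)⁻¹ ≤ (ρ₁ • expKernel s ρ₁)⁻¹ :=
    ((posDef_expKernel hs hρ₁).smul hρ₁).inv_le_inv (smul_expKernel_le_smul_expKernel s hρ₁ hρ₁₂.le)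
  have hinv ρ (hρ : 0 < ρ) : (ρ • expKernel s ρ)⁻¹ = ρ⁻¹ • (expKernel s ρ)⁻¹ :=
    inv_smul' _ (Units.mk0 ρ hρ.ne') ((isUnit_iff_isUnit_det _).1 (posDef_expKernel hs hρ).isUnit)
  have := (le_iff.1 hle).dotProduct_mulVec_nonneg z
  rw [hinv ρ₁ hρ₁, hinv ρ₂ hρ₂, star_trivial, sub_mulVec, dotProduct_sub, sub_nonneg, smul_mulVec,
    smul_mulVec, dotProduct_smul, dotProduct_smul, smul_eq_mul, smul_eq_mul] at this
  rw [one_div, one_div]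
  exact this

/-- Lemma 1 of Kaufman & Shaby (ν = 1/2): monotonicity in ρ of the quadratic form
`zᵀ Γₙ(ρ)⁻¹ z / ρ`, where `Γₙ(ρ)` is the exponential (Matérn ν = 1/2) correlation matrix. -/
theorem fixed_range_quadratic_form_antitone_nu_half
    (d n : ℕ) (hd : 1 ≤ d)
    (s : Fin n → EuclideanSpace ℝ (Fin d)) (hs : Function.Injective s)
    (ρ₁ ρ₂ : ℝ) (hρ₁ : 0 < ρ₁) (hρ₁₂ : ρ₁ < ρ₂)
    (z : Fin n → ℝ) :
    (1 / ρ₂) * (z ⬝ᵥ ((Matrix.of fun i j => Real.exp (-‖s i - s j‖ / ρ₂))⁻¹ *ᵥ z))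
      ≤ (1 / ρ₁) * (z ⬝ᵥ ((Matrix.of fun i j => Real.exp (-‖s i - s j‖ / ρ₁))⁻¹ *ᵥ z)) :=
  fixed_range_quadratic_form_antitone_nu_half_general d n s hs ρ₁ ρ₂ hρ₁ hρ₁₂ z
end

section
/- Let d ≥ 1 and let f_1, f_2 : ℝ^d → ℝ be integrable functions with 0 ≤ f_1(ω) ≤ f_2(ω) for almost every ω, and with each f_j even (f_j(−ω) = f_j(ω)). Define K_j(x) = ∫_{ℝ^d} e^{i⟨ω,x⟩} f_j(ω) dω (a real-valued function by evenness). Let s_1, …, s_n ∈ ℝ^d and let Γ_j be the n×n matrix with entries K_j(s_a − s_b). If Γ_1 and Γ_2 are both positive definite, then for every z ∈ ℝ^n, zᵀ Γ_2⁻¹ z ≤ zᵀ Γ_1⁻¹ z. (This is the abstract spectral-comparison argument underlying the proof of the paper's Lemma 1: pointwise ordering of spectral densities implies the reverse Loewner ordering of inverse covariance matrices.) -/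
/-!
The quadratic form of the kernel matrix of a density `f` is
`xᵀ Γ x = ∫ |∑ₐ xₐ e^{i⟪ω, sₐ⟫}|² f(ω) dω`, so `f₁ ≤ f₂` gives `Γ₁ ≤ Γ₂` in the Loewner order.
Inversion reverses that order: for `x = Γ₂⁻¹ z` and `y = Γ₁⁻¹ z`, expanding
`0 ≤ (x - y)ᵀ Γ₁ (x - y)` gives `zᵀ y ≥ 2 zᵀ x - xᵀ Γ₁ x ≥ 2 zᵀ x - xᵀ Γ₂ x = zᵀ x`.
-/

open Matrix MeasureTheory
open scoped RealInnerProductSpace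

section KernelMatrix

variable {E ι : Type*} [NormedAddCommGroup E] [InnerProductSpace ℝ E] [Fintype ι]

noncomputable def expInnerSum (s : ι → E) (x : ι → ℝ) (ω : E) : ℂ :=
  ∑ a, (x a : ℂ) * Complex.exp (Complex.I * (⟪ω, s a⟫ : ℝ))

theorem continuous_cexp_I_mul_inner (v : E) :
    Continuous fun ω : E => Complex.exp (Complex.I * (⟪ω, v⟫ : ℝ)) := by
  fun_prop

theorem norm_cexp_I_mul_inner (ω v : E) :
    ‖Complex.exp (Complex.I * (⟪ω, v⟫ : ℝ))‖ = 1 := by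
  rw [mul_comm]; exact Complex.norm_exp_ofReal_mul_I _

theorem continuous_expInnerSum (s : ι → E) (x : ι → ℝ) : Continuous (expInnerSum s x) := by
  unfold expInnerSum; fun_prop

theorem norm_expInnerSum_le (s : ι → E) (x : ι → ℝ) (ω : E) :
    ‖expInnerSum s x ω‖ ≤ ∑ a, |x a| :=
  (norm_sum_le _ _).trans <| Finset.sum_le_sum fun a _ => by
    rw [norm_mul, norm_cexp_I_mul_inner, mul_one, Complex.norm_real, Real.norm_eq_abs]

theorem sum_sum_mul_cexp_I_mul_inner_sub (s : ι → E) (x : ι → ℝ) (ω : E) :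
    ∑ a, ∑ b, (x a : ℂ) * x b * Complex.exp (Complex.I * (⟪ω, s a - s b⟫ : ℝ)) =
      Complex.normSq (expInnerSum s x ω) := by
  rw [← Complex.mul_conj, expInnerSum, map_sum, Finset.sum_mul_sum]
  refine Finset.sum_congr rfl fun a _ => Finset.sum_congr rfl fun b _ => ?_
  rw [inner_sub_right, Complex.ofReal_sub, mul_sub, Complex.exp_sub, div_eq_mul_inv,
    ← Complex.exp_neg, map_mul, Complex.conj_ofReal, ← Complex.exp_conj, map_mul,
    Complex.conj_I, Complex.conj_ofReal, neg_mul]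
  ring

variable [MeasurableSpace E]

noncomputable def fourierKernelMatrix (μ : Measure E) (f : E → ℝ) (s : ι → E) : Matrix ι ι ℝ :=
  Matrix.of fun a b => (∫ ω, Complex.exp (Complex.I * (⟪ω, s a - s b⟫ : ℝ)) * f ω ∂μ).re

variable [BorelSpace E] {μ : Measure E} {f : E → ℝ}

theorem MeasureTheory.Integrable.cexp_I_mul_inner_mul (hf : Integrable f μ) (v : E) :
    Integrable (fun ω => Complex.exp (Complex.I * (⟪ω, v⟫ : ℝ)) * f ω) μ :=
  hf.ofReal.bdd_mul (c := 1) (continuous_cexp_I_mul_inner v).aestronglyMeasurable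
    (.of_forall fun ω => (norm_cexp_I_mul_inner ω v).le)

theorem MeasureTheory.Integrable.normSq_expInnerSum_mul (hf : Integrable f μ) (s : ι → E)
    (x : ι → ℝ) :
    Integrable (fun ω => Complex.normSq (expInnerSum s x ω) * f ω) μ :=
  hf.bdd_mul (c := (∑ a, |x a|) ^ 2)
    (Complex.continuous_normSq.comp (continuous_expInnerSum s x)).aestronglyMeasurable
    (.of_forall fun ω => by
      rw [Real.norm_eq_abs, abs_of_nonneg (Complex.normSq_nonneg _), Complex.normSq_eq_norm_sq]
      exact pow_le_pow_left₀ (norm_nonneg _) (norm_expInnerSum_le s x ω) 2)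

theorem dotProduct_fourierKernelMatrix_mulVec (hf : Integrable f μ) (s : ι → E) (x : ι → ℝ) :
    x ⬝ᵥ (fourierKernelMatrix μ f s *ᵥ x) = ∫ ω, Complex.normSq (expInnerSum s x ω) * f ω ∂μ := by
  have hint a b := (hf.cexp_I_mul_inner_mul (s a - s b)).const_mul ((x a : ℂ) * x b)
  have hpoint ω : ((Complex.normSq (expInnerSum s x ω) * f ω : ℝ) : ℂ) =
      ∑ a, ∑ b, (x a : ℂ) * x b * (Complex.exp (Complex.I * (⟪ω, s a - s b⟫ : ℝ)) * f ω) := by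
    rw [Complex.ofReal_mul, ← sum_sum_mul_cexp_I_mul_inner_sub, Finset.sum_mul]
    simp_rw [Finset.sum_mul, mul_assoc]
  have hcomplex : ∑ a, ∑ b, (x a : ℂ) * x b *
      ∫ ω, Complex.exp (Complex.I * (⟪ω, s a - s b⟫ : ℝ)) * f ω ∂μ =
        ((∫ ω, Complex.normSq (expInnerSum s x ω) * f ω ∂μ : ℝ) : ℂ) := by
    rw [← integral_complex_ofReal, integral_congr_ae (.of_forall hpoint),
      integral_finsetSum _ fun a _ => integrable_finsetSum _ fun b _ => hint a b]
    refine Finset.sum_congr rfl fun a _ => ?_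
    rw [integral_finsetSum _ fun b _ => hint a b]
    exact Finset.sum_congr rfl fun b _ => (integral_const_mul _ _).symm
  rw [← Complex.ofReal_re (∫ ω, _ ∂μ), ← hcomplex, Complex.re_sum]
  simp only [dotProduct, mulVec, Finset.mul_sum, Complex.re_sum, fourierKernelMatrix, of_apply]
  refine Finset.sum_congr rfl fun a _ => Finset.sum_congr rfl fun b _ => ?_
  rw [← Complex.ofReal_mul, Complex.re_ofReal_mul]
  ring

theorem dotProduct_fourierKernelMatrix_mulVec_mono {f₁ f₂ : E → ℝ} (hf₁ : Integrable f₁ μ)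
    (hf₂ : Integrable f₂ μ) (hle : ∀ᵐ ω ∂μ, f₁ ω ≤ f₂ ω) (s : ι → E) (x : ι → ℝ) :
    x ⬝ᵥ (fourierKernelMatrix μ f₁ s *ᵥ x) ≤ x ⬝ᵥ (fourierKernelMatrix μ f₂ s *ᵥ x) := by
  rw [dotProduct_fourierKernelMatrix_mulVec hf₁, dotProduct_fourierKernelMatrix_mulVec hf₂]
  refine integral_mono_ae (hf₁.normSq_expInnerSum_mul s x) (hf₂.normSq_expInnerSum_mul s x) ?_
  filter_upwards [hle] with ω hω
  exact mul_le_mul_of_nonneg_left hω (Complex.normSq_nonneg _)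

end KernelMatrix

theorem Matrix.PosDef.dotProduct_inv_mulVec_le {ι : Type*} [Fintype ι] [DecidableEq ι]
    {A B : Matrix ι ι ℝ} (hA : A.PosDef) (hB : IsUnit B)
    (hAB : ∀ x, x ⬝ᵥ (A *ᵥ x) ≤ x ⬝ᵥ (B *ᵥ x)) (z : ι → ℝ) :
    z ⬝ᵥ (B⁻¹ *ᵥ z) ≤ z ⬝ᵥ (A⁻¹ *ᵥ z) := by
  set x := B⁻¹ *ᵥ z
  set y := A⁻¹ *ᵥ z
  have hBx : B *ᵥ x = z := by
    rw [mulVec_mulVec, mul_nonsing_inv _ ((isUnit_iff_isUnit_det B).mp hB), one_mulVec]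
  have hAy : A *ᵥ y = z := by
    rw [mulVec_mulVec, mul_nonsing_inv _ ((isUnit_iff_isUnit_det A).mp hA.isUnit), one_mulVec]
  have hyA : y ᵥ* A = z := by
    rw [← hA.isHermitian.eq, conjTranspose_eq_transpose_of_trivial, vecMul_transpose, hAy]
  have hnonneg := hA.posSemidef.dotProduct_mulVec_nonneg (x - y)
  rw [star_trivial, mulVec_sub, dotProduct_sub, sub_dotProduct, sub_dotProduct, hAy,
    dotProduct_mulVec y, hyA] at hnonneg
  have := hAB x
  rw [hBx] at this
  linarith [dotProduct_comm x z, dotProduct_comm y z]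

theorem inverse_quadratic_form_le_of_spectral_density_le_general
    (d n : ℕ)
    (f₁ f₂ : EuclideanSpace ℝ (Fin d) → ℝ)
    (hf₁ : Integrable f₁) (hf₂ : Integrable f₂)
    (hle : ∀ᵐ ω, 0 ≤ f₁ ω ∧ f₁ ω ≤ f₂ ω)
    (s : Fin n → EuclideanSpace ℝ (Fin d))
    (Γ₁ Γ₂ : Matrix (Fin n) (Fin n) ℝ)
    (hΓ₁ : ∀ a b, Γ₁ a b =
      (∫ ω : EuclideanSpace ℝ (Fin d),
        Complex.exp (Complex.I * (⟪ω, s a - s b⟫ : ℝ)) * f₁ ω).re)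
    (hΓ₂ : ∀ a b, Γ₂ a b =
      (∫ ω : EuclideanSpace ℝ (Fin d),
        Complex.exp (Complex.I * (⟪ω, s a - s b⟫ : ℝ)) * f₂ ω).re)
    (hpd₁ : Γ₁.PosDef) (hpd₂ : Γ₂.PosDef)
    (z : Fin n → ℝ) :
    z ⬝ᵥ (Γ₂⁻¹ *ᵥ z) ≤ z ⬝ᵥ (Γ₁⁻¹ *ᵥ z) := by
  obtain rfl : Γ₁ = fourierKernelMatrix volume f₁ s := Matrix.ext hΓ₁
  obtain rfl : Γ₂ = fourierKernelMatrix volume f₂ s := Matrix.ext hΓ₂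
  exact hpd₁.dotProduct_inv_mulVec_le hpd₂.isUnit
    (dotProduct_fourierKernelMatrix_mulVec_mono hf₁ hf₂ (hle.mono fun _ h => h.2) s) z

/-- The abstract spectral-comparison argument underlying Lemma 1 of Kaufman & Shaby:
if two integrable, even spectral densities satisfy `0 ≤ f₁ ≤ f₂` a.e., and `Γ₁, Γ₂` are
the (positive definite) kernel matrices of their inverse Fourier transforms at locations
`s₁, …, sₙ`, then `zᵀ Γ₂⁻¹ z ≤ zᵀ Γ₁⁻¹ z` for every `z`. -/
theorem inverse_quadratic_form_le_of_spectral_density_le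
    (d n : ℕ) (hd : 1 ≤ d)
    (f₁ f₂ : EuclideanSpace ℝ (Fin d) → ℝ)
    (hf₁ : Integrable f₁) (hf₂ : Integrable f₂)
    (hle : ∀ᵐ ω, 0 ≤ f₁ ω ∧ f₁ ω ≤ f₂ ω)
    (heven₁ : ∀ ω, f₁ (-ω) = f₁ ω) (heven₂ : ∀ ω, f₂ (-ω) = f₂ ω)
    (s : Fin n → EuclideanSpace ℝ (Fin d))
    (Γ₁ Γ₂ : Matrix (Fin n) (Fin n) ℝ)
    (hΓ₁ : ∀ a b, Γ₁ a b =
      (∫ ω : EuclideanSpace ℝ (Fin d),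
        Complex.exp (Complex.I * (⟪ω, s a - s b⟫ : ℝ)) * f₁ ω).re)
    (hΓ₂ : ∀ a b, Γ₂ a b =
      (∫ ω : EuclideanSpace ℝ (Fin d),
        Complex.exp (Complex.I * (⟪ω, s a - s b⟫ : ℝ)) * f₂ ω).re)
    (hpd₁ : Γ₁.PosDef) (hpd₂ : Γ₂.PosDef)
    (z : Fin n → ℝ) :
    z ⬝ᵥ (Γ₂⁻¹ *ᵥ z) ≤ z ⬝ᵥ (Γ₁⁻¹ *ᵥ z) :=
  inverse_quadratic_form_le_of_spectral_density_le_general d n f₁ f₂ hf₁ hf₂ hle s Γ₁ Γ₂ hΓ₁ hΓ₂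
    hpd₁ hpd₂ z
end
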